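/- Let Ω ⊂ ℝ³ be a bounded domain and V = {v ∈ (H₀¹(Ω))³ : div v = 0}. Let C_P be the Poincaré constant with ‖v‖_{L²} ≤ C_P ‖∇v‖_{L²} for all v ∈ V, and let û ∈ V ∩ (W^{1,∞}(Ω))³. Then for all u, v ∈ V, the bilinear estimate |((û·∇)u, v) + ((u·∇)û, v)| ≤ (3 C_P² ‖∇û‖_∞ + √3 C_P ‖û‖_∞) ‖∇u‖_{L²} ‖∇v‖_{L²} holds. -/

import Mathlib

/-! Pointwise on `Ω`, `|(û·∇)u·v| ≤ ‖û‖_∞ Σ_j |∂_j u| |v| ≤ √3 ‖û‖_∞ |∇u| |v|` and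
`|(u·∇)û·v| ≤ ‖∇û‖_∞ (Σ_j |u_j|)(Σ_i |v_i|) ≤ 3 ‖∇û‖_∞ |u| |v|`, each `√3` coming from comparing
an `ℓ¹` sum over three indices with a Euclidean norm. Integrating, the `L²` Cauchy–Schwarz
inequality bounds the two terms by `√3 ‖û‖_∞ ‖∇u‖ ‖v‖` and `3 ‖∇û‖_∞ ‖u‖ ‖v‖`, and the Poincaré
inequality turns each `L²` norm into `C_P` times a gradient norm. -/

open MeasureTheory
open scoped RealInnerProductSpace

noncomputable section

/-- Three-dimensional Euclidean space. -/
abbrev E3 := EuclideanSpace ℝ (Fin 3)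

/-- `pd u j x` is the partial derivative `∂_j u (x)` of a vector field `u`. -/
def pd (u : E3 → E3) (j : Fin 3) (x : E3) : E3 :=
  fderiv ℝ u x (EuclideanSpace.single j 1)

/-- Pointwise Frobenius product `∇u(x) · ∇v(x)`. -/
def gradDot (u v : E3 → E3) (x : E3) : ℝ := ∑ j, ⟪pd u j x, pd v j x⟫

/-- Divergence of a vector field. -/
def divg (u : E3 → E3) (x : E3) : ℝ := ∑ j, pd u j x j

/-- Membership in `V = {v ∈ (H₀¹(Ω))³ : div v = 0}` (vector fields vanishing
outside `Ω` and divergence free). -/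
def memV (Ω : Set E3) (u : E3 → E3) : Prop :=
  ContDiff ℝ 1 u ∧ (∀ x ∉ Ω, u x = 0) ∧ ∀ x, divg u x = 0

/-- Trilinear convection form `((w·∇)u)·v` at a point. -/
def convf (w u v : E3 → E3) (x : E3) : ℝ := ∑ j, w x j * ⟪pd u j x, v x⟫

/-- `H¹₀`-norm (gradient `L²`-norm) over `Ω`. -/
def gradNorm (Ω : Set E3) (u : E3 → E3) : ℝ := Real.sqrt (∫ x in Ω, gradDot u u x)

/-- `L²`-norm over `Ω`. -/
def l2Norm (Ω : Set E3) (u : E3 → E3) : ℝ := Real.sqrt (∫ x in Ω, ⟪u x, u x⟫)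

section FiniteSums

variable {ι : Type*}

lemma abs_sum_mul_le_mul_sum_abs (s : Finset ι) (a b : ι → ℝ) {M : ℝ}
    (ha : ∀ i ∈ s, |a i| ≤ M) : |∑ i ∈ s, a i * b i| ≤ M * ∑ i ∈ s, |b i| := by
  rw [Finset.mul_sum]
  refine (Finset.abs_sum_le_sum_abs _ _).trans (Finset.sum_le_sum fun i hi => ?_)
  rw [abs_mul]
  exact mul_le_mul_of_nonneg_right (ha i hi) (abs_nonneg _)

variable [Fintype ι]

lemma sum_le_sqrt_card_mul_sqrt_sum_sq (f : ι → ℝ) :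
    ∑ i, f i ≤ √(Fintype.card ι) * √(∑ i, f i ^ 2) := by
  rw [← Real.sqrt_mul (Nat.cast_nonneg _)]
  refine (le_abs_self _).trans (Real.abs_le_sqrt ?_)
  simpa using sq_sum_le_card_mul_sum_sq (s := Finset.univ) (f := f)

lemma sum_abs_le_sqrt_card_mul_norm (a : EuclideanSpace ℝ ι) :
    ∑ i, |a i| ≤ √(Fintype.card ι) * ‖a‖ := by
  simpa [EuclideanSpace.norm_eq, sq_abs] using sum_le_sqrt_card_mul_sqrt_sum_sq fun i => |a i|

lemma EuclideanSpace.inner_eq_sum_mul (a b : EuclideanSpace ℝ ι) : ⟪a, b⟫ = ∑ i, a i * b i := by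
  simp [PiLp.inner_apply, mul_comm]

end FiniteSums

section Integrals

variable {α : Type*} [MeasurableSpace α] {μ : Measure α}

lemma integral_mul_le_sqrt_mul_sqrt {f g : α → ℝ} (hf₀ : 0 ≤ᵐ[μ] f) (hg₀ : 0 ≤ᵐ[μ] g)
    (hf : MemLp f 2 μ) (hg : MemLp g 2 μ) :
    ∫ x, f x * g x ∂μ ≤ √(∫ x, f x ^ 2 ∂μ) * √(∫ x, g x ^ 2 ∂μ) := by
  have h := integral_mul_le_Lp_mul_Lq_of_nonneg Real.HolderConjugate.two_two hf₀ hg₀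
    (by simpa using hf) (by simpa using hg)
  simp only [Real.rpow_two] at h
  simpa only [Real.sqrt_eq_rpow, one_div] using h

lemma abs_setIntegral_le_of_abs_le {Ω : Set α} {f g : α → ℝ} (hΩ : MeasurableSet Ω)
    (hg : IntegrableOn g Ω μ) (h : ∀ x ∈ Ω, |f x| ≤ g x) :
    |∫ x in Ω, f x ∂μ| ≤ ∫ x in Ω, g x ∂μ := by
  simpa only [Real.norm_eq_abs] using
    norm_integral_le_of_norm_le (f := f) hg (ae_restrict_of_forall_mem hΩ h)

variable {X : Type*} [MetricSpace X] [ProperSpace X] [MeasurableSpace X]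
  [OpensMeasurableSpace X] {μ : Measure X} [IsFiniteMeasureOnCompacts μ] {Ω : Set X}

lemma Continuous.integrableOn_of_isBounded {f : X → ℝ} (hf : Continuous f)
    (hΩ : Bornology.IsBounded Ω) : IntegrableOn f Ω μ :=
  (hf.continuousOn.integrableOn_compact hΩ.isCompact_closure).mono_set subset_closure

lemma Continuous.setIntegral_mul_le_sqrt_mul_sqrt {f g : X → ℝ} (hf : Continuous f)
    (hg : Continuous g) (hf₀ : 0 ≤ f) (hg₀ : 0 ≤ g) (hΩ : Bornology.IsBounded Ω) :
    ∫ x in Ω, f x * g x ∂μ ≤ √(∫ x in Ω, f x ^ 2 ∂μ) * √(∫ x in Ω, g x ^ 2 ∂μ) := by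
  have memLp_two {h : X → ℝ} (hh : Continuous h) : MemLp h 2 (μ.restrict Ω) :=
    (memLp_two_iff_integrable_sq hh.aestronglyMeasurable).2
      ((hh.pow 2).integrableOn_of_isBounded hΩ)
  exact integral_mul_le_sqrt_mul_sqrt (ae_of_all _ hf₀) (ae_of_all _ hg₀)
    (memLp_two hf) (memLp_two hg)

end Integrals

section VectorFields

variable {Ω : Set E3} {u v w : E3 → E3} {x : E3} {M : ℝ}

lemma continuous_pd (hu : ContDiff ℝ 1 u) (j : Fin 3) : Continuous (pd u j) :=
  (hu.continuous_fderiv one_ne_zero).clm_apply continuous_const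

lemma gradDot_self_eq_sum_norm_sq : gradDot u u x = ∑ j, ‖pd u j x‖ ^ 2 :=
  Finset.sum_congr rfl fun _ _ => real_inner_self_eq_norm_sq _

lemma gradDot_self_nonneg : 0 ≤ gradDot u u x := by
  rw [gradDot_self_eq_sum_norm_sq]
  positivity

lemma continuous_gradDot (hu : ContDiff ℝ 1 u) : Continuous (gradDot u u) :=
  continuous_finsetSum _ fun j _ => (continuous_pd hu j).inner (continuous_pd hu j)

lemma abs_convf_le_of_abs_le (hw : ∀ i, |w x i| ≤ M) :
    |convf w u v x| ≤ √3 * M * (√(gradDot u u x) * ‖v x‖) := by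
  have hM : 0 ≤ M := (abs_nonneg _).trans (hw 0)
  calc |convf w u v x| ≤ M * ∑ j, |⟪pd u j x, v x⟫| :=
        abs_sum_mul_le_mul_sum_abs _ _ _ fun j _ => hw j
    _ ≤ M * ((∑ j, ‖pd u j x‖) * ‖v x‖) := by
        rw [Finset.sum_mul]
        gcongr with j
        exact abs_real_inner_le_norm _ _
    _ ≤ M * ((√3 * √(∑ j, ‖pd u j x‖ ^ 2)) * ‖v x‖) := by
        gcongr
        simpa using sum_le_sqrt_card_mul_sqrt_sum_sq fun j => ‖pd u j x‖
    _ = √3 * M * (√(gradDot u u x) * ‖v x‖) := by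
        rw [gradDot_self_eq_sum_norm_sq]
        ring

lemma abs_convf_le_of_abs_pd_le (hu : ∀ i j, |pd u j x i| ≤ M) :
    |convf w u v x| ≤ 3 * M * (‖w x‖ * ‖v x‖) := by
  have hM : 0 ≤ M := (abs_nonneg _).trans (hu 0 0)
  have sum_abs_le (a : E3) : ∑ i, |a i| ≤ √3 * ‖a‖ := by
    simpa using sum_abs_le_sqrt_card_mul_norm a
  have hinner (j : Fin 3) : |⟪pd u j x, v x⟫| ≤ M * (√3 * ‖v x‖) := by
    rw [EuclideanSpace.inner_eq_sum_mul]
    refine (abs_sum_mul_le_mul_sum_abs _ _ _ fun i _ => hu i j).trans ?_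
    gcongr
    exact sum_abs_le _
  calc |convf w u v x| = |∑ j, ⟪pd u j x, v x⟫ * w x j| := by simp only [convf, mul_comm]
    _ ≤ M * (√3 * ‖v x‖) * ∑ j, |w x j| :=
        abs_sum_mul_le_mul_sum_abs _ _ _ fun j _ => hinner j
    _ ≤ M * (√3 * ‖v x‖) * (√3 * ‖w x‖) := by
        gcongr
        exact sum_abs_le _
    _ = 3 * M * (‖w x‖ * ‖v x‖) := by
        linear_combination (M * ‖w x‖ * ‖v x‖) * Real.mul_self_sqrt zero_le_three

lemma setIntegral_sqrt_gradDot_mul_norm_le (hΩ : Bornology.IsBounded Ω) (hu : ContDiff ℝ 1 u)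
    (hv : Continuous v) : ∫ x in Ω, √(gradDot u u x) * ‖v x‖ ≤ gradNorm Ω u * l2Norm Ω v := by
  have h := (continuous_gradDot hu).sqrt.setIntegral_mul_le_sqrt_mul_sqrt (μ := volume)
    hv.norm (fun _ => Real.sqrt_nonneg _) (fun _ => norm_nonneg _) hΩ
  simp only [Real.sq_sqrt gradDot_self_nonneg, ← real_inner_self_eq_norm_sq] at h
  exact h

lemma setIntegral_norm_mul_norm_le (hΩ : Bornology.IsBounded Ω) (hu : Continuous u)
    (hv : Continuous v) : ∫ x in Ω, ‖u x‖ * ‖v x‖ ≤ l2Norm Ω u * l2Norm Ω v := by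
  have h := hu.norm.setIntegral_mul_le_sqrt_mul_sqrt (μ := volume)
    hv.norm (fun _ => norm_nonneg _) (fun _ => norm_nonneg _) hΩ
  simp only [← real_inner_self_eq_norm_sq] at h
  exact h

lemma abs_setIntegral_convf_le_of_abs_le (hΩm : MeasurableSet Ω) (hΩb : Bornology.IsBounded Ω)
    (hM : 0 ≤ M) (hw : ∀ x ∈ Ω, ∀ i, |w x i| ≤ M) (hu : ContDiff ℝ 1 u) (hv : Continuous v) :
    |∫ x in Ω, convf w u v x| ≤ √3 * M * (gradNorm Ω u * l2Norm Ω v) := by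
  have hG : Continuous fun x => √(gradDot u u x) * ‖v x‖ :=
    (continuous_gradDot hu).sqrt.mul hv.norm
  calc |∫ x in Ω, convf w u v x| ≤ ∫ x in Ω, √3 * M * (√(gradDot u u x) * ‖v x‖) :=
        abs_setIntegral_le_of_abs_le hΩm ((hG.const_mul _).integrableOn_of_isBounded hΩb)
          fun x hx => abs_convf_le_of_abs_le (hw x hx)
    _ ≤ √3 * M * (gradNorm Ω u * l2Norm Ω v) := by
        rw [integral_const_mul]
        gcongr
        exact setIntegral_sqrt_gradDot_mul_norm_le hΩb hu hv

lemma abs_setIntegral_convf_le_of_abs_pd_le (hΩm : MeasurableSet Ω)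
    (hΩb : Bornology.IsBounded Ω) (hM : 0 ≤ M) (hu : ∀ x ∈ Ω, ∀ i j, |pd u j x i| ≤ M)
    (hw : Continuous w) (hv : Continuous v) :
    |∫ x in Ω, convf w u v x| ≤ 3 * M * (l2Norm Ω w * l2Norm Ω v) := by
  have hG : Continuous fun x => ‖w x‖ * ‖v x‖ := hw.norm.mul hv.norm
  calc |∫ x in Ω, convf w u v x| ≤ ∫ x in Ω, 3 * M * (‖w x‖ * ‖v x‖) :=
        abs_setIntegral_le_of_abs_le hΩm ((hG.const_mul _).integrableOn_of_isBounded hΩb)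
          fun x hx => abs_convf_le_of_abs_pd_le (hu x hx)
    _ ≤ 3 * M * (l2Norm Ω w * l2Norm Ω v) := by
        rw [integral_const_mul]
        gcongr
        exact setIntegral_norm_mul_norm_le hΩb hw hv

end VectorFields

theorem stmt_6_general (Ω : Set E3) (hΩo : IsOpen Ω) (hΩb : Bornology.IsBounded Ω)
    (CP Mg Mu : ℝ)
    (hP : ∀ v, memV Ω v → l2Norm Ω v ≤ CP * gradNorm Ω v)
    (uh : E3 → E3)
    (hMg : ∀ x ∈ Ω, ∀ i j : Fin 3, |pd uh j x i| ≤ Mg)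
    (hMu : ∀ x ∈ Ω, ∀ i : Fin 3, |uh x i| ≤ Mu)
    (u v : E3 → E3) (hu : memV Ω u) (hv : memV Ω v) :
    |(∫ x in Ω, convf uh u v x) + ∫ x in Ω, convf u uh v x|
      ≤ (3 * CP ^ 2 * Mg + Real.sqrt 3 * CP * Mu) * gradNorm Ω u * gradNorm Ω v := by
  rcases Ω.eq_empty_or_nonempty with rfl | ⟨x₀, hx₀⟩
  · simp [gradNorm]
  have hMg₀ : 0 ≤ Mg := (abs_nonneg _).trans (hMg x₀ hx₀ 0 0)
  have hMu₀ : 0 ≤ Mu := (abs_nonneg _).trans (hMu x₀ hx₀ 0)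
  have hPu := hP u hu
  have hPv := hP v hv
  calc _ ≤ |∫ x in Ω, convf uh u v x| + |∫ x in Ω, convf u uh v x| := abs_add_le _ _
    _ ≤ √3 * Mu * (gradNorm Ω u * l2Norm Ω v) + 3 * Mg * (l2Norm Ω u * l2Norm Ω v) :=
        add_le_add
          (abs_setIntegral_convf_le_of_abs_le hΩo.measurableSet hΩb hMu₀ hMu hu.1 hv.1.continuous)
          (abs_setIntegral_convf_le_of_abs_pd_le hΩo.measurableSet hΩb hMg₀ hMg
            hu.1.continuous hv.1.continuous)
    _ ≤ √3 * Mu * (gradNorm Ω u * (CP * gradNorm Ω v))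
          + 3 * Mg * ((CP * gradNorm Ω u) * (CP * gradNorm Ω v)) := by
        have hgu : 0 ≤ gradNorm Ω u := Real.sqrt_nonneg _
        have hlv : 0 ≤ l2Norm Ω v := Real.sqrt_nonneg _
        have hCPu : 0 ≤ CP * gradNorm Ω u := (Real.sqrt_nonneg _).trans hPu
        gcongr
    _ = (3 * CP ^ 2 * Mg + √3 * CP * Mu) * gradNorm Ω u * gradNorm Ω v := by ring

/-- The ν₂ estimate: for `uh ∈ V ∩ (W^{1,∞})³`,
`|((uh·∇)u, v) + ((u·∇)uh, v)| ≤ (3C_P²‖∇uh‖_∞ + √3 C_P‖uh‖_∞)‖∇u‖‖∇v‖`. -/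
theorem stmt_6 (Ω : Set E3) (hΩo : IsOpen Ω) (hΩb : Bornology.IsBounded Ω)
    (CP Mg Mu : ℝ) (hCP0 : 0 ≤ CP)
    (hP : ∀ v, memV Ω v → l2Norm Ω v ≤ CP * gradNorm Ω v)
    (uh : E3 → E3) (huh : memV Ω uh)
    (hMg : ∀ x ∈ Ω, ∀ i j : Fin 3, |pd uh j x i| ≤ Mg)
    (hMu : ∀ x ∈ Ω, ∀ i : Fin 3, |uh x i| ≤ Mu)
    (u v : E3 → E3) (hu : memV Ω u) (hv : memV Ω v) :
    |(∫ x in Ω, convf uh u v x) + ∫ x in Ω, convf u uh v x|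
      ≤ (3 * CP ^ 2 * Mg + Real.sqrt 3 * CP * Mu) * gradNorm Ω u * gradNorm Ω v :=
  stmt_6_general Ω hΩo hΩb CP Mg Mu hP uh hMg hMu u v hu hv
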